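/- arXiv:2208.09731 — 3 statements merged into one kernel-verified Lean document; each statement's English description precedes it below -/
import Mathlib

section
/- Let Z be a zero forcing set of a matrix A ∈ F^{n×n} and b ∈ F^n. If Ax = b, Ay = b, and x and y agree on all coordinates in Z, then x = y. -/
open Matrix

section ZeroForcing

variable {V : Type*}

/-- The blue-coloring closure of the zero forcing process on a directed graph with
edge relation `E`, starting from the initially blue set `Z`:  a blue vertex `u` all of
whose out-neighbors except `v` are already blue forces `v` to become blue. -/
inductive Blue (E : V → V → Prop) (Z : Set V) : V → Prop
  | init {v : V} : v ∈ Z → Blue E Z v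
  | force {u v : V} : Blue E Z u → E u v →
      (∀ w, E u w → w ≠ v → Blue E Z w) → Blue E Z v

/-- `Z` is a zero forcing set if the forcing process colors every vertex blue. -/
def IsZeroForcingSet (E : V → V → Prop) (Z : Set V) : Prop := ∀ v, Blue E Z v

end ZeroForcing

section ForcingAlg

variable {F : Type*} [Field F] {n : ℕ}

/-- The off-diagonal adjacency pattern of a matrix: `u → v` iff `u ≠ v` and `A u v ≠ 0`. -/
def adjOf (A : Matrix (Fin n) (Fin n) F) (u v : Fin n) : Prop := u ≠ v ∧ A u v ≠ 0

/-- A chronological list of forces for the zero forcing set `Z` of `A`:  `π` lists the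
vertices outside `Z` in the order they are forced, and `par u` is the forcing parent of
`u` (the vertex that forces `u`). -/
structure ForcingOrder (A : Matrix (Fin n) (Fin n) F) (Z : Finset (Fin n)) where
  π : List (Fin n)
  par : Fin n → Fin n
  nodup : π.Nodup
  mem_iff : ∀ v, v ∈ π ↔ v ∉ Z
  par_ne_self : ∀ u ∈ π, par u ≠ u
  par_edge : ∀ u ∈ π, A (par u) u ≠ 0
  par_blue : ∀ u ∈ π, par u ∈ Z ∨ (par u ∈ π ∧ π.idxOf (par u) < π.idxOf u)
  others_blue : ∀ u ∈ π, ∀ w, w ≠ par u → w ≠ u → A (par u) w ≠ 0 →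
      (w ∈ Z ∨ (w ∈ π ∧ π.idxOf w < π.idxOf u))
  par_inj : ∀ u ∈ π, ∀ v ∈ π, par u = par v → u = v

/-- One step of the forcing algorithm: `x_u ← (b_{u↑} − A_{u↑,*} x) / A_{u↑,u}`. -/
def forcingStep (A : Matrix (Fin n) (Fin n) F) (par : Fin n → Fin n)
    (b : Fin n → F) (x : Fin n → F) (u : Fin n) : Fin n → F :=
  Function.update x u ((b (par u) - A (par u) ⬝ᵥ x) / A (par u) u)

/-- The forcing algorithm `Forcing(A, Z, b)`: starting from `x = 0`, iterate the forcing
update over the vertices outside `Z` in forcing order. -/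
def Forcing (A : Matrix (Fin n) (Fin n) F) {Z : Finset (Fin n)}
    (fo : ForcingOrder A Z) (b : Fin n → F) : Fin n → F :=
  fo.π.foldl (forcingStep A fo.par b) 0

/-- The map `R(b) = b − A · Forcing(A, Z, b)`. -/
def Rmap (A : Matrix (Fin n) (Fin n) F) {Z : Finset (Fin n)}
    (fo : ForcingOrder A Z) (b : Fin n → F) : Fin n → F :=
  b - A.mulVec (Forcing A fo b)

/-- A vertex is a terminal if it has no forcing child. -/
def IsTerminal {A : Matrix (Fin n) (Fin n) F} {Z : Finset (Fin n)}
    (fo : ForcingOrder A Z) (v : Fin n) : Prop :=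
  ∀ u ∈ fo.π, fo.par u ≠ v

instance {A : Matrix (Fin n) (Fin n) F} {Z : Finset (Fin n)} (fo : ForcingOrder A Z) :
    DecidablePred (IsTerminal fo) := fun v =>
  decidable_of_iff (∀ u ∈ fo.π, fo.par u ≠ v) Iff.rfl

/-- The core matrix `B = (R A)_{T,Z}`: its column indexed by `z ∈ Z` is `(R a_z)_T`,
where `a_z` is the `z`-th column of `A` and `T` is the terminal set. -/
def coreMatrix (A : Matrix (Fin n) (Fin n) F) {Z : Finset (Fin n)}
    (fo : ForcingOrder A Z) :
    Matrix {v // IsTerminal fo v} {v // v ∈ Z} F :=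
  Matrix.of fun t z => Rmap A fo (fun i => A i z.1) t.1

end ForcingAlg

/-! If `u` forces `v`, row `u` of `A (x - y) = 0` collapses to `A u v * (x v - y v) = 0`, and
`A u v ≠ 0`; so `x - y` vanishes on every blue vertex, and a zero forcing set makes them all blue. -/

theorem Matrix.eq_zero_of_mulVec_apply_eq_zero {ι R : Type*} [Fintype ι]
    [Ring R] [NoZeroDivisors R] {A : Matrix ι ι R} {d : ι → R} {u v : ι}
    (hAd : (A *ᵥ d) u = 0) (hAuv : A u v ≠ 0) (hd : ∀ w ≠ v, A u w ≠ 0 → d w = 0) :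
    d v = 0 := by
  have hrow : (A *ᵥ d) u = A u v * d v := by
    refine Finset.sum_eq_single v (fun w _ hwv => ?_) (by simp)
    by_cases hAuw : A u w = 0
    · exact mul_eq_zero_of_left hAuw _
    · exact mul_eq_zero_of_right _ (hd w hwv hAuw)
  rw [hrow] at hAd
  exact (mul_eq_zero.mp hAd).resolve_left hAuv

theorem Blue.apply_eq_zero_of_mulVec_eq_zero {F : Type*} [Field F] {n : ℕ}
    {A : Matrix (Fin n) (Fin n) F} {Z : Set (Fin n)} {d : Fin n → F} (hAd : A *ᵥ d = 0)
    (hZ : ∀ i ∈ Z, d i = 0) {v : Fin n} (hv : Blue (adjOf A) Z v) : d v = 0 := by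
  induction hv with
  | init hvZ => exact hZ _ hvZ
  | @force u v _ huv _ hu hothers =>
    refine eq_zero_of_mulVec_apply_eq_zero (congrFun hAd u) huv.2 fun w hwv hAuw => ?_
    by_cases hwu : w = u
    · exact hwu ▸ hu
    · exact hothers w ⟨Ne.symm hwu, hAuw⟩ hwv

/-- solutions of `A x = b` agreeing on a zero forcing set `Z` coincide. -/
theorem stmt2 {F : Type*} [Field F] {n : ℕ} (A : Matrix (Fin n) (Fin n) F)
    (Z : Finset (Fin n)) (hZ : IsZeroForcingSet (adjOf A) ↑Z)
    (b x y : Fin n → F) (hx : A.mulVec x = b) (hy : A.mulVec y = b)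
    (hagree : ∀ i ∈ Z, x i = y i) :
    x = y := by
  have hker : A *ᵥ (x - y) = 0 := by rw [mulVec_sub, hx, hy, sub_self]
  funext i
  exact sub_eq_zero.mp <|
    (hZ i).apply_eq_zero_of_mulVec_eq_zero hker fun j hj => sub_eq_zero.mpr (hagree j hj)
end

section
/- Fix A ∈ F^{n×n}, a zero forcing set Z of A, and a forcing order. Define R : F^n → F^n by R(b) = b − A·Forcing(A,Z,b). Then R is a linear map, and moreover for every column a_v = A_{*,v} of A with v ∉ Z, we have R(a_v) = 0. -/
open Matrix

/-!
Each forcing step is jointly linear in `(b, x)` and the iteration starts at `x = 0`, so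
`Forcing` and hence `R` are linear. For `b = a_v` with `v ∉ Z`, the iterate stays `0` until
`v` is forced and is `e_v` afterwards: when an earlier vertex `u` is forced, `v` is still
white, so the row of the forcing vertex of `u` vanishes at `v`.
-/

theorem List.foldl_eq_of_forall_eq_append_cons {α β : Type*} (g : β → α → β)
    (f : List α → β) (l : List α)
    (step : ∀ P u t, l = P ++ u :: t → g (f P) u = f (P ++ [u])) :
    l.foldl g (f []) = f l := by
  suffices ∀ P t, l = P ++ t → t.foldl g (f P) = f l from this [] l rfl
  intro P t
  induction t generalizing P with
  | nil => intro hl; simp [hl]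
  | cons u t ih =>
    intro hl
    rw [List.foldl_cons, step P u t hl, ih (P ++ [u]) (by simp [hl])]

theorem List.idxOf_lt_idxOf_of_nodup_append_cons {α : Type*} [BEq α] [LawfulBEq α]
    {P t : List α} {u v : α} (hl : (P ++ u :: t).Nodup) (hv : v ∈ t) :
    (P ++ u :: t).idxOf u < (P ++ u :: t).idxOf v := by
  grind

section Forcing

variable {F : Type*} [Field F] {n : ℕ} (A : Matrix (Fin n) (Fin n) F)

theorem forcingStep_add (par : Fin n → Fin n) (b₁ b₂ x₁ x₂ : Fin n → F) (u : Fin n) :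
    forcingStep A par (b₁ + b₂) (x₁ + x₂) u =
      forcingStep A par b₁ x₁ u + forcingStep A par b₂ x₂ u := by
  rw [forcingStep, forcingStep, forcingStep, ← Function.update_add]
  congr 1
  rw [Pi.add_apply, dotProduct_add, add_sub_add_comm, add_div]

theorem forcingStep_smul (par : Fin n → Fin n) (c : F) (b x : Fin n → F) (u : Fin n) :
    forcingStep A par (c • b) (c • x) u = c • forcingStep A par b x u := by
  rw [forcingStep, forcingStep, ← Function.update_smul]
  congr 1
  simp only [Pi.smul_apply, dotProduct_smul, smul_eq_mul]
  rw [← mul_sub, mul_div_assoc]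

variable {Z : Finset (Fin n)} (fo : ForcingOrder A Z)

theorem isLinearMap_forcing : IsLinearMap F (Forcing A fo) where
  map_add b₁ b₂ := by
    unfold Forcing
    simpa using List.foldl_hom₂ fo.π (fun x y : Fin n → F => x + y) _ _ _ 0 0
      fun x₁ x₂ u => (forcingStep_add A fo.par b₁ b₂ x₁ x₂ u).symm
  map_smul c b := by
    unfold Forcing
    simpa using List.foldl_hom (c • ·) (init := 0) (l := fo.π)
      (forcingStep_smul A fo.par c b)

theorem isLinearMap_rmap : IsLinearMap F (Rmap A fo) :=
  (LinearMap.id - A.mulVecLin ∘ₗ (isLinearMap_forcing A fo).mk' _).isLinear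

namespace ForcingOrder

variable {A} {fo}

theorem entry_par_eq_zero_of_idxOf_lt {u v : Fin n} (hu : u ∈ fo.π) (hv : v ∈ fo.π)
    (hlt : fo.π.idxOf u < fo.π.idxOf v) : A (fo.par u) v = 0 := by
  by_contra hA
  have hZv : v ∉ Z := (fo.mem_iff v).1 hv
  have hpar : v ≠ fo.par u := by
    rintro rfl
    rcases fo.par_blue u hu with hZ | ⟨-, hpar_lt⟩
    · exact hZv hZ
    · omega
  have huv : v ≠ u := by
    rintro rfl
    omega
  rcases fo.others_blue u hu v hpar huv hA with hZ | ⟨-, hv_lt⟩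
  · exact hZv hZ
  · omega

end ForcingOrder

theorem forcingStep_column {v : Fin n} (hv : v ∈ fo.π) {P t : List (Fin n)} {u : Fin n}
    (hsplit : fo.π = P ++ u :: t) :
    forcingStep A fo.par (fun i => A i v) (if v ∈ P then Pi.single v 1 else 0) u =
      if v ∈ P ++ [u] then Pi.single v 1 else 0 := by
  have hnodup : (P ++ u :: t).Nodup := hsplit ▸ fo.nodup
  have hu : u ∈ fo.π := by simp [hsplit]
  have huP : u ∉ P := fun h => (List.nodup_append.1 hnodup).2.2 u h u (by simp) rfl
  by_cases hvu : v = u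
  · subst hvu
    rw [if_neg huP, if_pos (by simp), forcingStep, dotProduct_zero, sub_zero,
      div_self (fo.par_edge v hu)]
    rfl
  by_cases hvP : v ∈ P
  · rw [if_pos hvP, if_pos (by simp [hvP]), forcingStep, dotProduct_single, mul_one, sub_self,
      zero_div, Function.update_eq_self_iff, Pi.single_eq_of_ne (Ne.symm hvu)]
  · have hvt : v ∈ t := by simpa [hsplit, hvP, hvu] using hv
    have hA : A (fo.par u) v = 0 := ForcingOrder.entry_par_eq_zero_of_idxOf_lt hu hv
      (hsplit ▸ List.idxOf_lt_idxOf_of_nodup_append_cons hnodup hvt)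
    rw [if_neg hvP, if_neg (by simp [hvP, hvu]), forcingStep, hA, dotProduct_zero, sub_zero,
      zero_div, Function.update_eq_self_iff, Pi.zero_apply]

theorem forcing_column {v : Fin n} (hv : v ∉ Z) :
    Forcing A fo (fun i => A i v) = Pi.single v 1 := by
  have hvπ : v ∈ fo.π := (fo.mem_iff v).2 hv
  have := List.foldl_eq_of_forall_eq_append_cons _
    (fun P => if v ∈ P then Pi.single v 1 else 0) fo.π
    (fun _ _ _ hsplit => forcingStep_column A fo hvπ hsplit)
  simpa [Forcing, hvπ] using this

end Forcing

theorem stmt6_general {F : Type*} [Field F] {n : ℕ} (A : Matrix (Fin n) (Fin n) F)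
    (Z : Finset (Fin n))
    (fo : ForcingOrder A Z) :
    IsLinearMap F (fun b => Rmap A fo b) ∧
    ∀ v ∉ Z, Rmap A fo (fun i => A i v) = 0 := by
  refine ⟨isLinearMap_rmap A fo, fun v hv => ?_⟩
  rw [Rmap, forcing_column A fo hv, mulVec_single_one, sub_eq_zero]
  rfl

/-- `R(b) = b − A·Forcing(A,Z,b)` is a linear map, and `R a_v = 0` for
every column `a_v` of `A` with `v ∉ Z`. -/
theorem stmt6 {F : Type*} [Field F] {n : ℕ} (A : Matrix (Fin n) (Fin n) F)
    (Z : Finset (Fin n)) (hZ : IsZeroForcingSet (adjOf A) ↑Z)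
    (fo : ForcingOrder A Z) :
    IsLinearMap F (fun b => Rmap A fo b) ∧
    ∀ v ∉ Z, Rmap A fo (fun i => A i v) = 0 :=
  stmt6_general A Z fo
end

section
/- Fix A ∈ F^{n×n}, zero forcing set Z of size k, and define R(b) = b − A·Forcing(A,Z,b) and L(b) = Forcing(A,Z,b). Then for all b ∈ F^n, the support of R(b) is contained in the terminal set T, and the support of L(b) is contained in V∖Z. -/
open Matrix

/-! When `u` is forced, every neighbour of its parent `p` other than `u` is already blue, so the
later steps never touch the support of row `p` of `A`; and the step at `u` is chosen to make row
`p` of `A x = b` exact. Hence `R(b)` vanishes at every vertex that forces, i.e. off the terminals.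
The coordinates in `Z` are never written, so `L(b)` vanishes on `Z`. -/
theorem List.idxOf_lt_idxOf_of_mem_append_cons {α : Type*} [DecidableEq α] {l₁ l₂ : List α}
    {a b : α} (hnd : (l₁ ++ a :: l₂).Nodup) (hb : b ∈ l₂) :
    (l₁ ++ a :: l₂).idxOf a < (l₁ ++ a :: l₂).idxOf b := by
  have ha₁ : a ∉ l₁ := fun h => List.disjoint_of_nodup_append hnd h List.mem_cons_self
  have hb₁ : b ∉ l₁ := fun h =>
    List.disjoint_of_nodup_append hnd h (List.mem_cons_of_mem _ hb)
  have hba : b ≠ a := by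
    rintro rfl
    exact (List.nodup_cons.mp (List.nodup_append.mp hnd).2.1).1 hb
  rw [List.idxOf_append_of_notMem ha₁, List.idxOf_append_of_notMem hb₁, List.idxOf_cons_self,
    List.idxOf_cons_ne _ hba.symm]
  omega

theorem Matrix.dotProduct_update {R ι : Type*} [CommRing R] [Fintype ι] [DecidableEq ι]
    (v x : ι → R) (i : ι) (c : R) :
    v ⬝ᵥ Function.update x i c = v ⬝ᵥ x + v i * (c - x i) := by
  have : Function.update x i c = x + Pi.single i (c - x i) := by
    funext j
    by_cases h : j = i <;> simp [h]
  rw [this, dotProduct_add, dotProduct_single]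

section ForcingAlgorithm

variable {F : Type*} [Field F] {n : ℕ} (A : Matrix (Fin n) (Fin n) F) (par : Fin n → Fin n)
  (b : Fin n → F)

theorem foldl_forcingStep_apply_of_notMem {l : List (Fin n)} {v : Fin n} (hv : v ∉ l)
    (x : Fin n → F) : l.foldl (forcingStep A par b) x v = x v := by
  induction l generalizing x with
  | nil => rfl
  | cons u l ih =>
    simp only [List.mem_cons, not_or] at hv
    rw [List.foldl_cons, ih hv.2, forcingStep, Function.update_of_ne hv.1]

theorem dotProduct_foldl_forcingStep_of_forall_mem {l : List (Fin n)} {v : Fin n → F}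
    (hv : ∀ w ∈ l, v w = 0) (x : Fin n → F) :
    v ⬝ᵥ l.foldl (forcingStep A par b) x = v ⬝ᵥ x := by
  refine Finset.sum_congr rfl fun w _ => ?_
  by_cases hw : w ∈ l
  · simp [hv w hw]
  · rw [foldl_forcingStep_apply_of_notMem A par b hw]

theorem dotProduct_forcingStep_self {x : Fin n → F} {u : Fin n} (hx : x u = 0)
    (hu : A (par u) u ≠ 0) : A (par u) ⬝ᵥ forcingStep A par b x u = b (par u) := by
  rw [forcingStep, Matrix.dotProduct_update, hx, sub_zero, mul_div_cancel₀ _ hu]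
  ring

end ForcingAlgorithm

namespace ForcingOrder

variable {F : Type*} [Field F] {n : ℕ} {A : Matrix (Fin n) (Fin n) F} {Z : Finset (Fin n)}
  (fo : ForcingOrder A Z)

theorem notMem_suffix_of_blue_before {l₁ l₂ : List (Fin n)} {u w : Fin n}
    (h : fo.π = l₁ ++ u :: l₂)
    (hw : w ∈ Z ∨ (w ∈ fo.π ∧ fo.π.idxOf w < fo.π.idxOf u)) : w ∉ l₂ := by
  intro hw₂
  have hwπ : w ∈ fo.π := h ▸ List.mem_append_right _ (List.mem_cons_of_mem _ hw₂)
  rcases hw with hwZ | ⟨-, hlt⟩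
  · exact (fo.mem_iff w).mp hwπ hwZ
  · have hnd := fo.nodup
    rw [h] at hnd hlt
    exact absurd (List.idxOf_lt_idxOf_of_mem_append_cons hnd hw₂) (by omega)

theorem row_par_eq_zero_of_mem_suffix {l₁ l₂ : List (Fin n)} {u w : Fin n}
    (h : fo.π = l₁ ++ u :: l₂) (hw : w ∈ l₂) : A (fo.par u) w = 0 := by
  have hu : u ∈ fo.π := h ▸ List.mem_append_right _ List.mem_cons_self
  by_contra hA
  by_cases hwp : w = fo.par u
  · exact fo.notMem_suffix_of_blue_before h (hwp ▸ fo.par_blue u hu) hw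
  · have hwu : w ≠ u := by
      rintro rfl
      have hnd := fo.nodup
      rw [h] at hnd
      exact (List.nodup_cons.mp (List.nodup_append.mp hnd).2.1).1 hw
    exact fo.notMem_suffix_of_blue_before h (fo.others_blue u hu w hwp hwu hA) hw

theorem Rmap_apply_par (b : Fin n → F) {u : Fin n} (hu : u ∈ fo.π) :
    Rmap A fo b (fo.par u) = 0 := by
  obtain ⟨l₁, l₂, h⟩ := List.append_of_mem hu
  have hu₁ : u ∉ l₁ := by
    have hnd := fo.nodup
    rw [h] at hnd
    exact fun h₁ => List.disjoint_of_nodup_append hnd h₁ List.mem_cons_self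
  set x := l₁.foldl (forcingStep A fo.par b) 0
  have hForcing :
      Forcing A fo b = l₂.foldl (forcingStep A fo.par b) (forcingStep A fo.par b x u) := by
    rw [Forcing, h, List.foldl_append, List.foldl_cons]
  have hxu : x u = 0 := foldl_forcingStep_apply_of_notMem A fo.par b hu₁ 0
  rw [Rmap, Pi.sub_apply, mulVec, hForcing,
    dotProduct_foldl_forcingStep_of_forall_mem A fo.par b
      (fun w hw => fo.row_par_eq_zero_of_mem_suffix h hw),
    dotProduct_forcingStep_self A fo.par b hxu (fo.par_edge u hu), sub_self]

theorem Forcing_apply_of_mem (b : Fin n → F) {v : Fin n} (hv : v ∈ Z) : Forcing A fo b v = 0 :=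
  foldl_forcingStep_apply_of_notMem A fo.par b (fun h => (fo.mem_iff v).mp h hv) 0

end ForcingOrder

theorem stmt7_general {F : Type*} [Field F] {n : ℕ} (A : Matrix (Fin n) (Fin n) F)
    (Z : Finset (Fin n))
    (fo : ForcingOrder A Z) (b : Fin n → F) :
    (∀ v, Rmap A fo b v ≠ 0 → IsTerminal fo v) ∧
    (∀ v, Forcing A fo b v ≠ 0 → v ∉ Z) :=
  ⟨fun _ hv _ hu hpar => hv (hpar ▸ fo.Rmap_apply_par b hu),
    fun _ hv hvZ => hv (fo.Forcing_apply_of_mem b hvZ)⟩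

/-- for every `b`, `supp(R(b))` is contained in the terminal set `T`
and `supp(L(b))` is contained in `V ∖ Z`. -/
theorem stmt7 {F : Type*} [Field F] {n : ℕ} (A : Matrix (Fin n) (Fin n) F)
    (Z : Finset (Fin n)) (hZ : IsZeroForcingSet (adjOf A) ↑Z)
    (fo : ForcingOrder A Z) (b : Fin n → F) :
    (∀ v, Rmap A fo b v ≠ 0 → IsTerminal fo v) ∧
    (∀ v, Forcing A fo b v ≠ 0 → v ∉ Z) :=
  stmt7_general A Z fo b
end
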